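/- Let {ψ_m}_{m∈ℤ²} be an orthonormal family in the range of an orthogonal projection P on L²(ℝ²), with each ψ_m satisfying ∫ ⟨x₁−m₁⟩^{2(1+δ)}|ψ_m|² dx ≤ C₀ and ∫ ⟨x₂−m₂⟩^{2(1+δ)}|ψ_m|² dx ≤ C₀, and assume {ψ_m}_{m∈ℤ²} spans Ran(P). Let P_c := Σ_{|m|_∞ ≤ c} |ψ_m⟩⟨ψ_m|. Then for all a, b ≥ 1, ‖χ_a (P − P_{a+b})‖²_{HS} ≤ C (b^{−δ} + a b^{−(1+δ)}) for a constant C depending only on C₀ and δ. -/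

import Mathlib

/-!
If `|m₁| = |m|_∞ = n > a + b`, then `⟨x₁ - m₁⟩ ≥ n - a` on the box `[-a, a)²`, so localization
in the first coordinate gives `∫_{χ_a} |ψ_m|² ≤ C₀ (n - a)^{-2(1+δ)}`; symmetrically if
`|m₂| = |m|_∞`. There are `8n` sites with `|m|_∞ = n`, and writing `n = (n - a) + a` with
`n - a > b` gives `8n (n - a)^{-2(1+δ)} ≤ 8 (b^{-δ} + a b^{-(1+δ)}) (n - a)^{-(1+δ)}`; the
remaining tail `∑_{n > a+b} (n - a)^{-(1+δ)}` is at most `∑_{j ≥ 1} j^{-(1+δ)}` since `b ≥ 1`.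
-/

open MeasureTheory Real

noncomputable section

abbrev Plane := EuclideanSpace ℝ (Fin 2)
abbrev H2 := Lp ℂ 2 (volume : Measure Plane)

/-- The square `[-c, c)²` in the plane. -/
def box (c : ℝ) : Set Plane := {x | x 0 ∈ Set.Ico (-c) c ∧ x 1 ∈ Set.Ico (-c) c}

/-- Japanese bracket of a real number. -/
def jb (t : ℝ) : ℝ := Real.sqrt (t ^ 2 + 1)

open scoped ENNReal

lemma measurableSet_box (a : ℝ) : MeasurableSet (box a) :=
  ((measurable_pi_apply 0).comp (PiLp.continuous_ofLp 2 _).measurable measurableSet_Ico).inter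
    ((measurable_pi_apply 1).comp (PiLp.continuous_ofLp 2 _).measurable measurableSet_Ico)

lemma abs_apply_le_of_mem_box {a : ℝ} {x : Plane} (hx : x ∈ box a) (i : Fin 2) : |x i| ≤ a := by
  fin_cases i
  · exact abs_le.2 ⟨hx.1.1, hx.1.2.le⟩
  · exact abs_le.2 ⟨hx.2.1, hx.2.2.le⟩

lemma jb_nonneg (t : ℝ) : 0 ≤ jb t := Real.sqrt_nonneg _

lemma abs_le_jb (t : ℝ) : |t| ≤ jb t := by
  rw [jb, ← Real.sqrt_sq_eq_abs]
  exact Real.sqrt_le_sqrt (by linarith)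

lemma const_mul_setLIntegral_le_lintegral_mul {α : Type*} [MeasurableSpace α] {μ : Measure α}
    {s : Set α} (hs : MeasurableSet s) {K : ℝ≥0∞} {w g : α → ℝ≥0∞} (hw : ∀ x ∈ s, K ≤ w x) :
    K * ∫⁻ x in s, g x ∂μ ≤ ∫⁻ x, w x * g x ∂μ :=
  calc K * ∫⁻ x in s, g x ∂μ ≤ ∫⁻ x in s, K * g x ∂μ := lintegral_const_mul_le K g
    _ ≤ ∫⁻ x in s, w x * g x ∂μ := setLIntegral_mono' hs fun x hx => by gcongr; exact hw x hx
    _ ≤ ∫⁻ x, w x * g x ∂μ := setLIntegral_le_lintegral s _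

lemma setLIntegral_box_le_of_moment {f : Plane → ℂ} {i : Fin 2} {a c s C₀ : ℝ} (hs : 0 ≤ s)
    (hac : a < |c|)
    (hmom : ∫⁻ x, ENNReal.ofReal (jb (x i - c) ^ s * ‖f x‖ ^ 2) ≤ ENNReal.ofReal C₀) :
    ∫⁻ x in box a, ENNReal.ofReal (‖f x‖ ^ 2)
      ≤ ENNReal.ofReal C₀ * ENNReal.ofReal ((|c| - a) ^ (-s)) := by
  have ht : 0 < |c| - a := sub_pos.2 hac
  have hK : 0 < (|c| - a) ^ s := rpow_pos_of_pos ht s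
  have hweight : ∀ x ∈ box a,
      ENNReal.ofReal ((|c| - a) ^ s) ≤ ENNReal.ofReal (jb (x i - c) ^ s) := fun x hx => by
    refine ENNReal.ofReal_le_ofReal (rpow_le_rpow ht.le ?_ hs)
    calc |c| - a ≤ |c| - |x i| := by linarith [abs_apply_le_of_mem_box hx i]
      _ ≤ |x i - c| := by rw [abs_sub_comm]; exact abs_sub_abs_le_abs_sub c (x i)
      _ ≤ jb (x i - c) := abs_le_jb _
  have hmain := (const_mul_setLIntegral_le_lintegral_mul (μ := volume) (measurableSet_box a)
    (g := fun x => ENNReal.ofReal (‖f x‖ ^ 2)) hweight).trans_eq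
    (lintegral_congr fun x => (ENNReal.ofReal_mul (rpow_nonneg (jb_nonneg _) s)).symm)
  rw [rpow_neg ht.le, ENNReal.ofReal_inv_of_pos hK, ← div_eq_mul_inv,
    ENNReal.le_div_iff_mul_le (Or.inl (by positivity)) (Or.inl ENNReal.ofReal_ne_top), mul_comm]
  exact hmain.trans hmom

def tailWeight (a b p : ℝ) (n : ℕ) : ℝ≥0∞ :=
  if a + b < n then ENNReal.ofReal ((n - a) ^ (-p)) else 0

lemma ite_setLIntegral_box_le_tailWeight {f : Plane → ℂ} (m : ℤ × ℤ) {a b s C₀ : ℝ} (hb : 0 ≤ b)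
    (hs : 0 ≤ s)
    (hmom₀ : ∫⁻ x, ENNReal.ofReal (jb (x 0 - m.1) ^ s * ‖f x‖ ^ 2) ≤ ENNReal.ofReal C₀)
    (hmom₁ : ∫⁻ x, ENNReal.ofReal (jb (x 1 - m.2) ^ s * ‖f x‖ ^ 2) ≤ ENNReal.ofReal C₀) :
    (if a + b < max (|m.1| : ℝ) (|m.2| : ℝ) then ∫⁻ x in box a, ENNReal.ofReal (‖f x‖ ^ 2) else 0)
      ≤ ENNReal.ofReal C₀ * tailWeight a b s (max m.1.natAbs m.2.natAbs) := by
  have hmax : max (|m.1| : ℝ) (|m.2| : ℝ) = ((max m.1.natAbs m.2.natAbs : ℕ) : ℝ) := by simp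
  rw [tailWeight, hmax]
  split_ifs with hfar
  · rw [← hmax] at hfar ⊢
    rcases le_total (|m.2| : ℝ) (|m.1| : ℝ) with h | h
    · rw [max_eq_left h] at hfar ⊢
      exact setLIntegral_box_le_of_moment hs (by linarith) hmom₀
    · rw [max_eq_right h] at hfar ⊢
      exact setLIntegral_box_le_of_moment hs (by linarith) hmom₁
  · exact zero_le

lemma tsum_comp_max_natAbs (F : ℕ → ℝ≥0∞) :
    ∑' m : ℤ × ℤ, F (max m.1.natAbs m.2.natAbs)
      = ∑' n, ((Finset.box n : Finset (ℤ × ℤ)).card : ℝ≥0∞) * F n := by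
  set N : ℤ × ℤ → ℕ := fun m => max m.1.natAbs m.2.natAbs
  rw [← ENNReal.tsum_fiberwise _ N]
  refine tsum_congr fun n => ?_
  have hfiber : N ⁻¹' {n} = ↑(Finset.box n : Finset (ℤ × ℤ)) := by
    ext m
    simp [N]
  calc ∑' m : N ⁻¹' {n}, F (N m) = ∑' m : N ⁻¹' {n}, F n := tsum_congr fun m => congrArg F m.2
    _ = _ := by
      rw [hfiber, ENNReal.tsum_const, ENat.card_coe_set_eq, Set.encard_coe_eq_coe_finsetCard]
      rfl

lemma add_mul_rpow_neg_two_mul_le {a b t δ : ℝ} (ha : 0 ≤ a) (hb : 0 < b) (hbt : b ≤ t)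
    (hδ : 0 ≤ δ) :
    (t + a) * t ^ (-(2 * (1 + δ))) ≤ (b ^ (-δ) + a * b ^ (-(1 + δ))) * t ^ (-(1 + δ)) := by
  have ht : 0 < t := hb.trans_le hbt
  have hsplit : (t + a) * t ^ (-(2 * (1 + δ)))
      = (t ^ (-δ) + a * t ^ (-(1 + δ))) * t ^ (-(1 + δ)) := by
    have h₁ : t ^ (-(2 * (1 + δ))) = t ^ (-(1 + δ)) * t ^ (-(1 + δ)) := by
      rw [← rpow_add ht]; ring_nf
    have h₂ : t * t ^ (-(1 + δ)) = t ^ (-δ) := by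
      nth_rw 1 [← rpow_one t]
      rw [← rpow_add ht]; ring_nf
    rw [h₁, ← h₂]; ring
  have hδb : t ^ (-δ) ≤ b ^ (-δ) := rpow_le_rpow_of_nonpos hb hbt (by linarith)
  have hδb' : t ^ (-(1 + δ)) ≤ b ^ (-(1 + δ)) := rpow_le_rpow_of_nonpos hb hbt (by linarith)
  rw [hsplit]
  gcongr

lemma card_box_mul_tailWeight_le {a b δ : ℝ} (ha : 0 ≤ a) (hb : 0 < b) (hδ : 0 ≤ δ) (n : ℕ) :
    ((Finset.box n : Finset (ℤ × ℤ)).card : ℝ≥0∞) * tailWeight a b (2 * (1 + δ)) n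
      ≤ ENNReal.ofReal (8 * (b ^ (-δ) + a * b ^ (-(1 + δ)))) * tailWeight a b (1 + δ) n := by
  unfold tailWeight
  split_ifs with hfar
  · have hn : n ≠ 0 := by rintro rfl; push_cast at hfar; linarith
    have ht : b ≤ n - a := by linarith
    rw [Int.card_box hn, ← ENNReal.ofReal_natCast,
      ← ENNReal.ofReal_mul (by positivity), ← ENNReal.ofReal_mul (by positivity)]
    refine ENNReal.ofReal_le_ofReal ?_
    have := add_mul_rpow_neg_two_mul_le ha hb ht hδ
    rw [sub_add_cancel] at this
    push_cast
    linarith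
  · simp

lemma tsum_tailWeight_le {a b p : ℝ} (hb : 1 ≤ b) (hp : 1 < p) :
    ∑' n, tailWeight a b p n ≤ ENNReal.ofReal (∑' j : ℕ, ((j : ℝ) + 1) ^ (-p)) := by
  set N := ⌈a + b⌉₊
  have hsupport : Function.support (tailWeight a b p) ⊆ Set.range (· + N) := by
    intro n hn
    have hfar : a + b < n := by by_contra h; exact hn (if_neg h)
    exact ⟨n - N, Nat.sub_add_cancel (Nat.ceil_le.2 hfar.le)⟩
  have hsum : Summable fun j : ℕ => ((j : ℝ) + 1) ^ (-p) :=
    (summable_nat_add_iff 1).2 (Real.summable_nat_rpow.2 (by linarith : -p < -1)) |>.congr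
      fun j => by push_cast; rfl
  rw [← (add_left_injective N).tsum_eq hsupport,
    ENNReal.ofReal_tsum_of_nonneg (fun j => by positivity) hsum]
  refine ENNReal.tsum_le_tsum fun j => ?_
  unfold tailWeight
  split_ifs
  · refine ENNReal.ofReal_le_ofReal (rpow_le_rpow_of_nonpos (by positivity) ?_ (by linarith))
    have := Nat.le_ceil (a + b)
    push_cast
    linarith
  · exact zero_le

/-- far estimate.  For a (1+δ)-localized orthonormal basis {ψ_m}_{m∈ℤ²}
of the range of an orthogonal projection P, and P_c the sub-projection onto the ψ_m
with |m|_∞ ≤ c, for all a, b ≥ 1: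
‖χ_a (P − P_{a+b})‖²_{HS} = Σ_{|m|_∞ > a+b} ‖χ_a ψ_m‖² ≤ C (b^{−δ} + a b^{−(1+δ)}). -/
theorem stmt8 (δ C₀ : ℝ) (hδ : 0 < δ) :
    ∃ C : ℝ, ∀ (P : H2 →L[ℂ] H2), IsSelfAdjoint P → IsIdempotentElem P →
      ∀ (ψ : ℤ × ℤ → H2), Orthonormal ℂ ψ → (∀ m, P (ψ m) = ψ m) →
      (∀ f : H2, P f ∈ (Submodule.span ℂ (Set.range ψ)).topologicalClosure) →
      (∀ m : ℤ × ℤ, ∫⁻ x, ENNReal.ofReal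
          ((jb (x 0 - (m.1 : ℝ))) ^ (2 * (1 + δ)) * ‖(ψ m : Plane → ℂ) x‖ ^ 2)
          ≤ ENNReal.ofReal C₀) →
      (∀ m : ℤ × ℤ, ∫⁻ x, ENNReal.ofReal
          ((jb (x 1 - (m.2 : ℝ))) ^ (2 * (1 + δ)) * ‖(ψ m : Plane → ℂ) x‖ ^ 2)
          ≤ ENNReal.ofReal C₀) →
      ∀ a b : ℝ, 1 ≤ a → 1 ≤ b →
        (∑' m : ℤ × ℤ,
            if a + b < max (|m.1| : ℝ) (|m.2| : ℝ) then
              ∫⁻ x in box a, ENNReal.ofReal (‖(ψ m : Plane → ℂ) x‖ ^ 2)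
            else 0)
          ≤ ENNReal.ofReal (C * (b ^ (-δ) + a * b ^ (-(1 + δ)))) := by
  set Z := ∑' j : ℕ, ((j : ℝ) + 1) ^ (-(1 + δ))
  have hZ : 0 ≤ Z := tsum_nonneg fun j => by positivity
  refine ⟨C₀ * (8 * Z), fun P _ _ ψ _ _ _ hmom₀ hmom₁ a b ha hb => ?_⟩
  set M := b ^ (-δ) + a * b ^ (-(1 + δ))
  calc _ ≤ ∑' m : ℤ × ℤ, ENNReal.ofReal C₀
          * tailWeight a b (2 * (1 + δ)) (max m.1.natAbs m.2.natAbs) :=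
        ENNReal.tsum_le_tsum fun m =>
          ite_setLIntegral_box_le_tailWeight m (by linarith) (by linarith) (hmom₀ m) (hmom₁ m)
    _ = ENNReal.ofReal C₀ * ∑' n, ((Finset.box n : Finset (ℤ × ℤ)).card : ℝ≥0∞)
          * tailWeight a b (2 * (1 + δ)) n := by
        rw [ENNReal.tsum_mul_left, tsum_comp_max_natAbs]
    _ ≤ ENNReal.ofReal C₀ * ∑' n, ENNReal.ofReal (8 * M) * tailWeight a b (1 + δ) n := by
        gcongr ENNReal.ofReal C₀ * ?_
        exact ENNReal.tsum_le_tsum fun n =>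
          card_box_mul_tailWeight_le (zero_le_one.trans ha) (zero_lt_one.trans_le hb) hδ.le n
    _ ≤ ENNReal.ofReal C₀ * (ENNReal.ofReal (8 * M) * ENNReal.ofReal Z) := by
        rw [ENNReal.tsum_mul_left]
        gcongr
        exact tsum_tailWeight_le hb (by linarith)
    _ = ENNReal.ofReal (C₀ * (8 * Z) * M) := by
        rw [← ENNReal.ofReal_mul' hZ, ← ENNReal.ofReal_mul' (by positivity)]
        ring_nf
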